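/- Let f(x,y) = y^3 - P(x)y + Q(x) with P, Q nonzero formal power series over ℂ vanishing at 0. Then the Milnor number μ = dim_ℂ ℂ[[x,y]]/(f_x, f_y) equals the x-adic order of the power series 3 Q'(x)^2 - P(x) P'(x)^2, provided this power series is nonzero. -/

import Mathlib

/-!
Since `P(0) = 0`, the polynomial `y² - P/3` is distinguished, so by Weierstrass division
`ℂ[[x,y]]/(f_y)` is the free quadratic `ℂ[[x]]`-algebra `ℂ[[x]][ω]/(ω² - P/3)`, in which `f_x`
becomes `Q' - P' ω`. The Milnor algebra is the quotient of this rank-two `ℂ[[x]]`-module by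
multiplication by `Q' - P' ω`. Over the discrete valuation ring `ℂ[[x]]`, Smith normal form shows
that such a cokernel has `ℂ`-dimension the `x`-adic order of the determinant, here the norm
`Q'² - P P'²/3 = g/3`.
-/

open Module
open scoped PowerSeries

section

open Polynomial

variable {R : Type*} [CommRing R] {a b : R}

theorem Polynomial.isDistinguishedAt_X_sq_sub_C_mul_X_sub_C {I : Ideal R} (ha : a ∈ I)
    (hb : b ∈ I) : (X ^ 2 - C b * X - C a).IsDistinguishedAt I where
  monic := by monicity!
  mem {n} hn := by
    nontriviality R
    have : (X ^ 2 - C b * X - C a).natDegree = 2 := by compute_degree!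
    rw [this] at hn
    interval_cases n <;> simp [coeff_X, coeff_C, ha, hb]

theorem Polynomial.coe_X_sq_sub_C_mul_X_sub_C :
    ((X ^ 2 - C b * X - C a : R[X]) : R⟦X⟧) =
      PowerSeries.X ^ 2 - PowerSeries.C b * PowerSeries.X - PowerSeries.C a := by
  simp

namespace QuadraticAlgebra

variable (a b) in
noncomputable def equivAdjoinRoot :
    QuadraticAlgebra R a b ≃ₐ[R] AdjoinRoot (X ^ 2 - C b * X - C a) :=
  AlgEquiv.ofAlgHom
    (lift ⟨AdjoinRoot.root _, by
      have := AdjoinRoot.eval₂_root (X ^ 2 - C b * X - C a)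
      simp only [eval₂_sub, eval₂_mul, eval₂_X_pow, eval₂_C, eval₂_X] at this
      rw [Algebra.smul_def, Algebra.smul_def, mul_one, AdjoinRoot.algebraMap_eq]
      linear_combination this⟩)
    (AdjoinRoot.liftAlgHom _ (Algebra.ofId R _) ω (by
      simp only [eval₂_sub, eval₂_mul, eval₂_X_pow, eval₂_C, eval₂_X, AlgHom.coe_toRingHom,
        Algebra.ofId_apply]
      rw [sq, omega_mul_omega_eq_add, Algebra.smul_def, Algebra.smul_def, mul_one]
      ring))
    (by ext; simp)
    (algHom_ext (by simp))

/-- Linear over an arbitrary base `S`, because for `R = F⟦X⟧` scalars cannot be restricted later: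
instance search resolves `Algebra F⟦X⟧ F⟦X⟧⟦X⟧` to `PowerSeries.algebraPowerSeries`, which maps
`f(x)` to `f(y)`, not to the constant embedding used here. -/
noncomputable def equivQuotient (S : Type*) [CommSemiring S] [Algebra S R] {I : Ideal R}
    [IsAdicComplete I R] (ha : a ∈ I) (hb : b ∈ I) :
    QuadraticAlgebra R a b ≃ₐ[S]
      R⟦X⟧ ⧸ Ideal.span {PowerSeries.X ^ 2 - PowerSeries.C b * PowerSeries.X - PowerSeries.C a} :=
  have : IsScalarTower S R R⟦X⟧ := .of_algebraMap_eq fun _ ↦ PowerSeries.algebraMap_apply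
  AlgEquiv.restrictScalars S <| (equivAdjoinRoot a b).trans <|
    (isDistinguishedAt_X_sq_sub_C_mul_X_sub_C ha hb).algEquivQuotient.trans <|
      Ideal.quotientEquivAlgOfEq R (by rw [coe_X_sq_sub_C_mul_X_sub_C])

variable (S : Type*) [CommSemiring S] [Algebra S R]

theorem equivQuotient_omega {I : Ideal R} [IsAdicComplete I R] (ha : a ∈ I) (hb : b ∈ I) :
    equivQuotient S ha hb ω = Ideal.Quotient.mk _ PowerSeries.X := by
  have : equivAdjoinRoot a b ω = Ideal.Quotient.mk (Ideal.span {X ^ 2 - C b * X - C a}) X := by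
    simp [equivAdjoinRoot]
    rfl
  change Ideal.quotientEquivAlgOfEq R (by rw [coe_X_sq_sub_C_mul_X_sub_C])
    ((isDistinguishedAt_X_sq_sub_C_mul_X_sub_C ha hb).algEquivQuotient (equivAdjoinRoot a b ω)) = _
  rw [this]
  simp

theorem equivQuotient_mk {I : Ideal R} [IsAdicComplete I R] (ha : a ∈ I) (hb : b ∈ I) (u v : R) :
    equivQuotient S ha hb ⟨u, v⟩ =
      Ideal.Quotient.mk _ (PowerSeries.C u + PowerSeries.C v * PowerSeries.X) := by
  have : (⟨u, v⟩ : QuadraticAlgebra R a b) = algebraMap R _ u + algebraMap R _ v * ω := by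
    ext <;> simp
  -- the underlying function of `equivQuotient S` does not depend on `S`
  change equivQuotient R ha hb _ = _
  rw [this, map_add, map_mul, AlgEquiv.commutes, AlgEquiv.commutes, equivQuotient_omega]
  rfl

theorem algebraNorm_eq_norm (z : QuadraticAlgebra R a b) : Algebra.norm R z = z.norm := by
  rw [Algebra.norm_apply]
  exact det_toLinearMap_eq_norm z

end QuadraticAlgebra

end

section

variable {R M ι : Type*} [CommRing R] [IsDomain R] [IsPrincipalIdealRing R]
  [AddCommGroup M] [Module R M] [Fintype ι] [DecidableEq ι]

theorem LinearMap.associated_det_prod_smithNormalFormCoeffs (b : Basis ι R M) {φ : M →ₗ[R] M}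
    (hφ : Function.Injective φ) :
    Associated (LinearMap.det φ)
      (∏ i, Submodule.smithNormalFormCoeffs b (LinearMap.finrank_range_of_inj hφ) i) := by
  set h := LinearMap.finrank_range_of_inj hφ
  set b' := Submodule.smithNormalFormTopBasis b h
  set ab := Submodule.smithNormalFormBotBasis b h
  rw [← Matrix.det_diagonal, ← LinearMap.det_toLin b']
  have hdiag : (Matrix.toLin b' b' (.diagonal (Submodule.smithNormalFormCoeffs b h))).comp
      (ab.equiv b' (Equiv.refl ι)).toLinearMap = (LinearMap.range φ).subtype :=
    ab.ext fun i ↦ by simp [Matrix.toLin_self, Matrix.diagonal_apply, ab, b']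
  -- `φ = diag(a) ∘ e`, where `e x` has in `b'` the coordinates that `φ x` has in `ab`.
  refine LinearMap.associated_det_of_eq_comp
    ((LinearEquiv.ofInjective φ hφ).trans (ab.equiv b' (Equiv.refl ι))) _ _ fun x ↦ ?_
  simpa using (LinearMap.congr_fun hdiag (LinearEquiv.ofInjective φ hφ x)).symm

end

namespace PowerSeries

section CommRing

variable {R : Type*} [CommRing R]

theorem ker_pi_coeff (n : ℕ) :
    LinearMap.ker (LinearMap.pi fun i : Fin n ↦ coeff (R := R) i) =
      (Ideal.span {(X : R⟦X⟧) ^ n}).restrictScalars R := by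
  ext f
  simp [Ideal.mem_span_singleton, X_pow_dvd_iff, funext_iff, Fin.forall_iff]

theorem surjective_pi_coeff (n : ℕ) :
    Function.Surjective (LinearMap.pi fun i : Fin n ↦ coeff (R := R) i) := fun v ↦
  ⟨mk fun i ↦ if h : i < n then v ⟨i, h⟩ else 0, by ext i; simp⟩

noncomputable def quotientSpanXPowEquiv (n : ℕ) :
    (R⟦X⟧ ⧸ Ideal.span {(X : R⟦X⟧) ^ n}) ≃ₗ[R] (Fin n → R) :=
  (Submodule.Quotient.restrictScalarsEquiv R _).symm ≪≫ₗ
    Submodule.quotEquivOfEq _ _ (ker_pi_coeff n).symm ≪≫ₗ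
    LinearMap.quotKerEquivOfSurjective _ (surjective_pi_coeff n)

end CommRing

theorem order_eq_of_associated {R : Type*} [CommSemiring R] [NoZeroDivisors R] [Nontrivial R]
    {a b : R⟦X⟧} (h : Associated a b) : a.order = b.order := by
  obtain ⟨u, rfl⟩ := h
  rw [order_mul, order_zero_of_unit u.isUnit, add_zero]

variable {F : Type*} [Field F]

theorem span_singleton_eq_span_X_pow_order {a : F⟦X⟧} (ha : a ≠ 0) :
    Ideal.span {a} = Ideal.span {X ^ a.order.toNat} :=
  Ideal.span_singleton_eq_span_singleton.mpr
    ⟨(isUnit_divided_by_X_pow_order ha).unit, X_pow_order_mul_divXPowOrder⟩ |>.symm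

theorem finite_quotient_span_singleton {a : F⟦X⟧} (ha : a ≠ 0) :
    Module.Finite F (F⟦X⟧ ⧸ Ideal.span {a}) := by
  rw [span_singleton_eq_span_X_pow_order ha]
  exact Module.Finite.equiv (quotientSpanXPowEquiv _).symm

theorem finrank_quotient_span_singleton_eq_order {a : F⟦X⟧} (ha : a ≠ 0) :
    (Module.finrank F (F⟦X⟧ ⧸ Ideal.span {a}) : ℕ∞) = a.order := by
  rw [span_singleton_eq_span_X_pow_order ha, (quotientSpanXPowEquiv _).finrank_eq,
    Module.finrank_fin_fun, ENat.natCast_toNat (order_finite_iff_ne_zero.mpr ha).ne]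

variable {M ι : Type*} [AddCommGroup M] [Module F⟦X⟧ M] [Module F M] [IsScalarTower F F⟦X⟧ M]
  [Fintype ι]

theorem finrank_quotient_range_eq_order_det (b : Basis ι F⟦X⟧ M) {φ : M →ₗ[F⟦X⟧] M}
    (hφ : Function.Injective φ) :
    (finrank F (M ⧸ LinearMap.range φ) : ℕ∞) = (LinearMap.det φ).order := by
  classical
  have h := LinearMap.finrank_range_of_inj hφ
  have := fun i ↦ finite_quotient_span_singleton (Submodule.smithNormalFormCoeffs_ne_zero b h i)
  rw [Submodule.finrank_quotient_eq_sum F b h, Nat.cast_sum,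
    order_eq_of_associated (LinearMap.associated_det_prod_smithNormalFormCoeffs b hφ), order_prod]
  exact Finset.sum_congr rfl fun i _ ↦
    finrank_quotient_span_singleton_eq_order (Submodule.smithNormalFormCoeffs_ne_zero b h i)

theorem finrank_quotient_span_eq_order_norm {S : Type*} [CommRing S] [Algebra F⟦X⟧ S]
    [Algebra F S] [IsScalarTower F F⟦X⟧ S] (b : Basis ι F⟦X⟧ S) {z : S}
    (hz : Algebra.norm F⟦X⟧ z ≠ 0) :
    (finrank F (S ⧸ Ideal.span {z}) : ℕ∞) = (Algebra.norm F⟦X⟧ z).order := by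
  have := Module.Free.of_basis b
  have := Module.Finite.of_basis b
  rw [Algebra.norm_apply] at hz ⊢
  have hinj : Function.Injective (Algebra.lmul F⟦X⟧ S z) :=
    LinearMap.ker_eq_bot.mp (not_not.mp (mt LinearMap.det_eq_zero_iff_ker_ne_bot.mpr hz))
  have hrange : LinearMap.range (Algebra.lmul F⟦X⟧ S z) =
      (Ideal.span {z}).restrictScalars F⟦X⟧ := by
    ext y
    simp [Ideal.mem_span_singleton', mul_comm]
  rw [← finrank_quotient_range_eq_order_det b hinj, hrange,
    ((Submodule.Quotient.restrictScalarsEquiv F⟦X⟧ _).restrictScalars F).finrank_eq]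

theorem finrank_quotient_span_C_add_C_mul_X_X_sq_sub {a b : F⟦X⟧} (ha : constantCoeff a = 0)
    (hb : constantCoeff b = 0) (u v : F⟦X⟧) (huv : u * u + b * u * v - a * v * v ≠ 0) :
    (finrank F (F⟦X⟧⟦X⟧ ⧸ Ideal.span {C u + C v * X, X ^ 2 - C b * X - C a}) : ℕ∞) =
      (u * u + b * u * v - a * v * v).order := by
  let J : Ideal F⟦X⟧⟦X⟧ := Ideal.span {X ^ 2 - C b * X - C a}
  have ha' : a ∈ Ideal.span {(X : F⟦X⟧)} := Ideal.mem_span_singleton.mpr (X_dvd_iff.mpr ha)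
  have hb' : b ∈ Ideal.span {(X : F⟦X⟧)} := Ideal.mem_span_singleton.mpr (X_dvd_iff.mpr hb)
  let e := QuadraticAlgebra.equivQuotient F ha' hb'
  have hJ : Ideal.span {C u + C v * X, X ^ 2 - C b * X - C a} = J ⊔ Ideal.span {C u + C v * X} := by
    rw [Ideal.span_insert, sup_comm]
  have hz : Ideal.span {(⟨u, v⟩ : QuadraticAlgebra F⟦X⟧ a b)} =
      ((Ideal.span {C u + C v * X}).map (Ideal.Quotient.mkₐ F J)).map e.symm := by
    rw [Ideal.map_span, Ideal.map_span, Set.image_singleton, Set.image_singleton,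
      Ideal.Quotient.mkₐ_eq_mk, ← QuadraticAlgebra.equivQuotient_mk F ha' hb', e.symm_apply_apply]
  let E := (Ideal.quotientEquivAlgOfEq F hJ).trans <|
    (DoubleQuot.quotQuotEquivQuotSupₐ F J _).symm.trans <| Ideal.quotientEquivAlg _ _ e.symm hz
  rw [E.toLinearEquiv.finrank_eq, finrank_quotient_span_eq_order_norm (QuadraticAlgebra.basis a b)
    (by rwa [QuadraticAlgebra.algebraNorm_eq_norm]), QuadraticAlgebra.algebraNorm_eq_norm]
  rfl

theorem finrank_quotient_span_C_mul_X_add_C_three_mul_X_sq_sub_C (h3 : (3 : F) ≠ 0)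
    {P : F⟦X⟧} (hP : constantCoeff P = 0) (P' Q' : F⟦X⟧) (hne : 3 * Q' ^ 2 - P * P' ^ 2 ≠ 0) :
    (finrank F (F⟦X⟧⟦X⟧ ⧸ Ideal.span {C (-P') * X + C Q', 3 * X ^ 2 - C P}) : ℕ∞) =
      (3 * Q' ^ 2 - P * P' ^ 2).order := by
  set c := C (3⁻¹ : F) * P
  have h3C : C (3⁻¹ : F) * 3 = 1 := by
    rw [← map_ofNat C 3, ← map_mul, inv_mul_cancel₀ h3, map_one]
  have h3unit : IsUnit (3 : F⟦X⟧) := by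
    simpa only [map_ofNat] using (Ne.isUnit h3).map (C (R := F))
  have h3unit' : IsUnit (3 : F⟦X⟧⟦X⟧) := by
    simpa only [map_ofNat] using h3unit.map (C (R := F⟦X⟧))
  have hnorm : 3 * Q' ^ 2 - P * P' ^ 2 = 3 * (Q' * Q' + 0 * Q' * -P' - c * -P' * -P') := by
    linear_combination (P * P' ^ 2) * h3C
  have hfy : (3 * X ^ 2 - C P : F⟦X⟧⟦X⟧) = 3 * (X ^ 2 - C 0 * X - C c) := by
    have h3C' := congrArg (C (R := F⟦X⟧)) h3C
    rw [map_mul, map_one, map_ofNat] at h3C'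
    simp only [c, map_mul, map_zero]
    linear_combination C P * h3C'
  have hspan : Ideal.span {C (-P') * X + C Q', 3 * X ^ 2 - C P} =
      Ideal.span {C Q' + C (-P') * X, X ^ 2 - C 0 * X - C c} := by
    rw [Ideal.span_insert, Ideal.span_insert, add_comm (C (-P') * X), hfy,
      Ideal.span_singleton_mul_left_unit h3unit']
  rw [hspan, finrank_quotient_span_C_add_C_mul_X_X_sq_sub (by simp [c, hP]) (map_zero _) _ _
    (right_ne_zero_of_mul (hnorm ▸ hne)), hnorm, order_mul, order_zero_of_unit h3unit, zero_add]

end PowerSeries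

-- `ℂ[[x,y]]` is encoded as `ℂ[[x]][[y]]`: `PowerSeries.X` in `fx`, `fy` is `y`.
theorem milnor_number_eq_order_general (P Q : PowerSeries ℂ)
    (hP0 : PowerSeries.constantCoeff (R := ℂ) P = 0)
    (g : PowerSeries ℂ)
    (hg : g = 3 * (PowerSeries.derivativeFun Q) ^ 2
        - P * (PowerSeries.derivativeFun P) ^ 2)
    (hgne : g ≠ 0)
    (fx fy : PowerSeries (PowerSeries ℂ))
    (hfx : fx = PowerSeries.C (R := PowerSeries ℂ) (-(PowerSeries.derivativeFun P))
          * PowerSeries.X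
        + PowerSeries.C (R := PowerSeries ℂ) (PowerSeries.derivativeFun Q))
    (hfy : fy = 3 * PowerSeries.X ^ 2 - PowerSeries.C (R := PowerSeries ℂ) P) :
    (Module.finrank ℂ
        (PowerSeries (PowerSeries ℂ) ⧸
          Ideal.span ({fx, fy} : Set (PowerSeries (PowerSeries ℂ)))) : ℕ∞)
      = g.order := by
  subst hg hfx hfy
  exact PowerSeries.finrank_quotient_span_C_mul_X_add_C_three_mul_X_sq_sub_C three_ne_zero hP0 _ _
    hgne

/-- For `f(x,y) = y^3 - P(x) y + Q(x)` with `P, Q` nonzero power series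
vanishing at `0`, viewing `ℂ[[x,y]]` as `ℂ[[x]][[y]]` with `x` the inner and
`y` the outer variable, the Milnor number `dim_ℂ ℂ[[x,y]]/(f_x, f_y)` (with
`f_x = -P' y + Q'` and `f_y = 3 y^2 - P`) equals the x-adic order of
`3 Q'^2 - P P'^2`, provided the latter is nonzero. -/
theorem milnor_number_eq_order (P Q : PowerSeries ℂ) (hP : P ≠ 0) (hQ : Q ≠ 0)
    (hP0 : PowerSeries.constantCoeff (R := ℂ) P = 0)
    (hQ0 : PowerSeries.constantCoeff (R := ℂ) Q = 0)
    (g : PowerSeries ℂ)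
    (hg : g = 3 * (PowerSeries.derivativeFun Q) ^ 2
        - P * (PowerSeries.derivativeFun P) ^ 2)
    (hgne : g ≠ 0)
    (fx fy : PowerSeries (PowerSeries ℂ))
    (hfx : fx = PowerSeries.C (R := PowerSeries ℂ) (-(PowerSeries.derivativeFun P))
          * PowerSeries.X
        + PowerSeries.C (R := PowerSeries ℂ) (PowerSeries.derivativeFun Q))
    (hfy : fy = 3 * PowerSeries.X ^ 2 - PowerSeries.C (R := PowerSeries ℂ) P) :
    (Module.finrank ℂ
        (PowerSeries (PowerSeries ℂ) ⧸
          Ideal.span ({fx, fy} : Set (PowerSeries (PowerSeries ℂ)))) : ℕ∞)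
      = g.order :=
  milnor_number_eq_order_general P Q hP0 g hg hgne fx fy hfx hfy
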